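/- In the graded ℤ₂-algebra A = Λ(y₁,y₂) ⊗ ℤ₂⟨t,x₁,x₂⟩/R with deg t = deg x₁ = deg y₁ = 1, deg x₂ = deg y₂ = 2, and R = (t², x₁², x₂², x₁x₂ - x₂x₁), the elements of the form w_I t^{ε_t} x_i^{ε_i} y_j^{η_j} (where w_I ranges over words in w₁,w₂,w₃, ε_t,ε_i,η_j ∈ {0,1}, i,j ∈ {1,2,3}) form a ℤ₂-vector space basis of A. -/

import Mathlib

/-!
The ℤ₂-algebra `A = Λ(y₁,y₂) ⊗ ℤ₂⟨t,x₁,x₂⟩ / R` from Anjos,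
"Homotopy type of symplectomorphism groups of S² × S²".
Generators of the free algebra: `0 ↦ t`, `1 ↦ x₁`, `2 ↦ x₂`, `3 ↦ y₁`, `4 ↦ y₂`.
Relations: `t² = x₁² = x₂² = 0`, `x₁x₂ = x₂x₁` (the ideal R), together with the
exterior-algebra relations `y₁² = y₂² = 0`, `y₁y₂ = y₂y₁` and the fact that the
`yᵢ` commute with `t, x₁, x₂` (tensor product).
-/

noncomputable section
open FreeAlgebra

abbrev F2 := ZMod 2
abbrev FA := FreeAlgebra F2 (Fin 5)

inductive ARel : FA → FA → Prop
  | t2 : ARel (ι F2 0 * ι F2 0) 0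
  | x1sq : ARel (ι F2 1 * ι F2 1) 0
  | x2sq : ARel (ι F2 2 * ι F2 2) 0
  | xcomm : ARel (ι F2 1 * ι F2 2) (ι F2 2 * ι F2 1)
  | y1sq : ARel (ι F2 3 * ι F2 3) 0
  | y2sq : ARel (ι F2 4 * ι F2 4) 0
  | ycomm : ARel (ι F2 3 * ι F2 4) (ι F2 4 * ι F2 3)
  | ycentral (i : Fin 3) (j : Fin 2) :
      ARel (ι F2 (Fin.castLE (by omega) i) * ι F2 (3 + Fin.castLE (by omega) j))
           (ι F2 (3 + Fin.castLE (by omega) j) * ι F2 (Fin.castLE (by omega) i))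

/-- The algebra `A = Λ(y₁,y₂) ⊗ ℤ₂⟨t,x₁,x₂⟩ / R`. -/
abbrev A := RingQuot ARel

def g (i : Fin 5) : A := RingQuot.mkAlgHom F2 ARel (ι F2 i)

/-- the degree-1 generator `t` -/
def t : A := g 0
/-- `xg 0 = x₁` (deg 1), `xg 1 = x₂` (deg 2), `xg 2 = x₃ = x₁x₂` (deg 3) -/
def xg : Fin 3 → A := ![g 1, g 2, g 1 * g 2]
/-- `yg 0 = y₁` (deg 1), `yg 1 = y₂` (deg 2), `yg 2 = y₃ = y₁y₂` (deg 3) -/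
def yg : Fin 3 → A := ![g 3, g 4, g 3 * g 4]
/-- `w i = xᵢ₊₁ t + t xᵢ₊₁` for `i = 0,1,2` (the commutators `w₁,w₂,w₃`) -/
def w (i : Fin 3) : A := xg i * t + t * xg i
/-- the word `w_I = w_{i₁} ⋯ w_{i_n}` -/
def wWord (I : List (Fin 3)) : A := (I.map w).prod

/-- index of a normalized monomial `w_I t^{ε_t} x_i^{ε_i} y_j^{η_j}` -/
abbrev BIx := List (Fin 3) × Bool × Option (Fin 3) × Option (Fin 3)

/-- the normalized monomial associated to an index -/
def bElt : BIx → A := fun ⟨I, et, ix, jy⟩ =>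
  wWord I * (if et then t else 1) * (ix.elim 1 xg) * (jy.elim 1 yg)

/-!
Right multiplication by a generator sends a normal monomial `w_I t^ε x y` to a combination of
normal monomials: the `y`'s are central, the `x`'s and the `y`'s multiply as in an exterior
algebra, and `x t = w + t x`, `t t = 0`, `t x t = w t`. So the span of the normal monomials
contains `1` and is stable under right multiplication by generators, hence is all of `A`.
Read on indices, the same rules define operators on the free `ℤ₂`-module on the index set, and
these operators satisfy the defining relations of `A`, so `A` acts on that module on the right.
The orbit map of the index of `1` is then a left inverse of the map sending an index to its
monomial, because every index is reached from that of `1` by the operators.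
-/

open Finsupp (single linearCombination)

theorem add_self_eq_zero_of_zmod_two {M : Type*} [AddCommGroup M] [Module (ZMod 2) M] (x : M) :
    x + x = 0 := by
  rw [← two_smul (ZMod 2), show (2 : ZMod 2) = 0 from rfl, zero_smul]

/-- Right multiplication of the monomials `1, a, b, ab` (encoded as `none, some 0, some 1, some 2`)
by `a` (`j = 0`) or `b` (`j = 1`), for square-zero commuting `a, b`; `none` means the product
vanishes. -/
def exteriorMul : Fin 2 → Option (Fin 3) → Option (Option (Fin 3))
  | 0, none => some (some 0)
  | 0, some 1 => some (some 2)
  | 1, none => some (some 1)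
  | 1, some 0 => some (some 2)
  | _, _ => none

theorem mul_exteriorMul {R : Type*} [Semiring R] {a b : R} (ha : a * a = 0) (hb : b * b = 0)
    (hab : Commute a b) (c : R) (o : Option (Fin 3)) (j : Fin 2) :
    c * o.elim 1 ![a, b, a * b] * ![a, b] j =
      (exteriorMul j o).elim 0 fun o' => c * o'.elim 1 ![a, b, a * b] := by
  have hb' (x : R) : b * (b * x) = 0 := by rw [← mul_assoc, hb, zero_mul]
  rcases o with _ | i
  · fin_cases j <;> simp [exteriorMul]
  · fin_cases i <;> fin_cases j <;> simp [exteriorMul, mul_assoc, ha, hb, hb', hab.eq]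

section OrbitMap

variable {R A M ι : Type*} [CommSemiring R] [Semiring A] [Algebra R A] [AddCommMonoid M]
  [Module R M] {g : ι → A} {op : ι → Module.End R M} {φ : A →ₗ[R] M} {L : M →ₗ[R] A}

theorem LinearMap.comp_eq_id_of_adjoin_eq_top (hg : Algebra.adjoin R (Set.range g) = ⊤)
    (hφ : ∀ a k, φ (a * g k) = op k (φ a)) (hL : ∀ m k, L (op k m) = L m * g k)
    (h1 : L (φ 1) = 1) : L ∘ₗ φ = LinearMap.id := by
  have hmul (a : A) : ∀ x, L (φ (x * a)) = L (φ x) * a := by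
    induction (hg ▸ Algebra.mem_top : a ∈ Algebra.adjoin R (Set.range g)) using
      Algebra.adjoin_induction with
    | mem _ hx => obtain ⟨k, rfl⟩ := hx; exact fun x => by rw [hφ, hL]
    | algebraMap r => exact fun x => by rw [← Algebra.commutes, ← Algebra.smul_def, map_smul,
        map_smul, Algebra.smul_def, Algebra.commutes]
    | add a b _ _ ha hb => exact fun x => by rw [mul_add, map_add, map_add, ha, hb, mul_add]
    | mul a b _ _ ha hb => exact fun x => by rw [← mul_assoc, hb, ha, mul_assoc]
  ext a
  simpa [h1] using hmul a 1

theorem LinearMap.comp_eq_id_of_cyclic (hφ : ∀ a k, φ (a * g k) = op k (φ a))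
    (hL : ∀ m k, L (op k m) = L m * g k) {m₀ : M}
    (hcyc : ∀ N : Submodule R M, m₀ ∈ N → (∀ k, ∀ m ∈ N, op k m ∈ N) → N = ⊤)
    (h₀ : φ (L m₀) = m₀) : φ ∘ₗ L = LinearMap.id := by
  refine LinearMap.eqLocus_eq_top.1 (hcyc _ h₀ fun k m hm => ?_)
  simp only [LinearMap.mem_eqLocus, LinearMap.coe_comp, Function.comp_apply, LinearMap.id_coe,
    id_eq] at hm ⊢
  rw [hL, hφ, hm]

end OrbitMap

theorem g_mul_g_eq_zero_of_rel {i j : Fin 5} (h : ARel (ι F2 i * ι F2 j) 0) : g i * g j = 0 := by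
  simpa [g] using RingQuot.mkAlgHom_rel F2 h

theorem commute_g_of_rel {i j : Fin 5} (h : ARel (ι F2 i * ι F2 j) (ι F2 j * ι F2 i)) :
    Commute (g i) (g j) := by
  simpa [g, Commute, SemiconjBy] using RingQuot.mkAlgHom_rel F2 h

theorem commute_yg_g (jy : Option (Fin 3)) (i : Fin 3) :
    Commute (jy.elim 1 yg) (g (Fin.castLE (by decide) i)) := by
  have h (j : Fin 2) := (commute_g_of_rel (ARel.ycentral i j)).symm
  rcases jy with _ | j
  · exact Commute.one_left _
  · fin_cases j
    exacts [h 0, h 1, (h 0).mul_left (h 1)]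

theorem t_mul_t : t * t = 0 := g_mul_g_eq_zero_of_rel ARel.t2

theorem mul_t_mul_t (a : A) : a * t * t = 0 := by
  rw [mul_assoc, t_mul_t, mul_zero]

theorem mul_xg_mul_t (a : A) (i : Fin 3) : a * xg i * t = a * w i + a * t * xg i := by
  rw [w, mul_add, ← mul_assoc, ← mul_assoc, add_assoc, add_self_eq_zero_of_zmod_two, add_zero]

theorem commute_t_w (i : Fin 3) : Commute t (w i) := by
  simp only [Commute, SemiconjBy, w, mul_add, add_mul, ← mul_assoc, t_mul_t, mul_t_mul_t,
    zero_mul, add_zero, zero_add]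

theorem wWord_append (I : List (Fin 3)) (i : Fin 3) : wWord (I ++ [i]) = wWord I * w i := by
  simp [wWord]

-- `x t = w + t x`, `t t = 0` and `t x t = w t`
def tAct : BIx → BIx →₀ F2
  | (I, false, none, jy) => single (I, true, none, jy) 1
  | (I, false, some i, jy) => single (I ++ [i], false, none, jy) 1 + single (I, true, some i, jy) 1
  | (_, true, none, _) => 0
  | (I, true, some i, jy) => single (I ++ [i], true, none, jy) 1

def xAct (p : Fin 2) : BIx → BIx →₀ F2
  | (I, e, ix, jy) => (exteriorMul p ix).elim 0 fun ix' => single (I, e, ix', jy) 1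

def yAct (q : Fin 2) : BIx → BIx →₀ F2
  | (I, e, ix, jy) => (exteriorMul q jy).elim 0 fun jy' => single (I, e, ix, jy') 1

def tOp : Module.End F2 (BIx →₀ F2) := linearCombination F2 tAct

def xOp (p : Fin 2) : Module.End F2 (BIx →₀ F2) := linearCombination F2 (xAct p)

def yOp (q : Fin 2) : Module.End F2 (BIx →₀ F2) := linearCombination F2 (yAct q)

def genOp : Fin 5 → Module.End F2 (BIx →₀ F2) := ![tOp, xOp 0, xOp 1, yOp 0, yOp 1]

@[simp] theorem tOp_single (b : BIx) : tOp (single b 1) = tAct b := by simp [tOp]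

@[simp] theorem xOp_single (p : Fin 2) (b : BIx) : xOp p (single b 1) = xAct p b := by simp [xOp]

@[simp] theorem yOp_single (q : Fin 2) (b : BIx) : yOp q (single b 1) = yAct q b := by simp [yOp]

theorem tOp_mul_self : tOp * tOp = 0 := by
  refine Finsupp.basisSingleOne.ext fun ⟨I, e, ix, jy⟩ => ?_
  cases e <;> rcases ix with _ | i <;>
    simp [Module.End.mul_apply, tAct, add_self_eq_zero_of_zmod_two]

theorem xOp_mul_self (p : Fin 2) : xOp p * xOp p = 0 := by
  refine Finsupp.basisSingleOne.ext fun ⟨I, e, ix, jy⟩ => ?_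
  rcases ix with _ | i <;> (try fin_cases i) <;> fin_cases p <;>
    simp [Module.End.mul_apply, xAct, exteriorMul]

theorem yOp_mul_self (q : Fin 2) : yOp q * yOp q = 0 := by
  refine Finsupp.basisSingleOne.ext fun ⟨I, e, ix, jy⟩ => ?_
  rcases jy with _ | j <;> (try fin_cases j) <;> fin_cases q <;>
    simp [Module.End.mul_apply, yAct, exteriorMul]

theorem commute_xOp (p q : Fin 2) : Commute (xOp p) (xOp q) := by
  refine Finsupp.basisSingleOne.ext fun ⟨I, e, ix, jy⟩ => ?_
  rcases ix with _ | i <;> (try fin_cases i) <;> fin_cases p <;> fin_cases q <;>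
    simp [Module.End.mul_apply, xAct, exteriorMul]

theorem commute_yOp (p q : Fin 2) : Commute (yOp p) (yOp q) := by
  refine Finsupp.basisSingleOne.ext fun ⟨I, e, ix, jy⟩ => ?_
  rcases jy with _ | j <;> (try fin_cases j) <;> fin_cases p <;> fin_cases q <;>
    simp [Module.End.mul_apply, yAct, exteriorMul]

theorem commute_tOp_yOp (q : Fin 2) : Commute tOp (yOp q) := by
  refine Finsupp.basisSingleOne.ext fun ⟨I, e, ix, jy⟩ => ?_
  cases e <;> rcases ix with _ | i <;> rcases jy with _ | j <;> (try fin_cases j) <;>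
    fin_cases q <;> simp [Module.End.mul_apply, tAct, yAct, exteriorMul]

theorem commute_xOp_yOp (p q : Fin 2) : Commute (xOp p) (yOp q) := by
  refine Finsupp.basisSingleOne.ext fun ⟨I, e, ix, jy⟩ => ?_
  rcases ix with _ | i <;> rcases jy with _ | j <;> (try fin_cases i) <;> (try fin_cases j) <;>
    fin_cases p <;> fin_cases q <;> simp [Module.End.mul_apply, xAct, yAct, exteriorMul]

theorem genOp_mul_self (k : Fin 5) : genOp k * genOp k = 0 := by
  fin_cases k
  exacts [tOp_mul_self, xOp_mul_self 0, xOp_mul_self 1, yOp_mul_self 0, yOp_mul_self 1]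

theorem commute_genOp_yOp (k : Fin 5) (q : Fin 2) : Commute (genOp k) (yOp q) := by
  fin_cases k
  exacts [commute_tOp_yOp q, commute_xOp_yOp 0 q, commute_xOp_yOp 1 q, commute_yOp 0 q,
    commute_yOp 1 q]

def freeRep : FA →ₐ[F2] (Module.End F2 (BIx →₀ F2))ᵐᵒᵖ :=
  FreeAlgebra.lift F2 fun k => MulOpposite.op (genOp k)

theorem freeRep_eq_of_rel ⦃x y : FA⦄ (h : ARel x y) : freeRep x = freeRep y := by
  have sq (k : Fin 5) : freeRep (ι F2 k * ι F2 k) = freeRep 0 := by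
    simp [freeRep, ← MulOpposite.op_mul, genOp_mul_self]
  have comm {i j : Fin 5} (hij : Commute (genOp i) (genOp j)) :
      freeRep (ι F2 i * ι F2 j) = freeRep (ι F2 j * ι F2 i) := by
    simp [freeRep, ← MulOpposite.op_mul, hij.eq]
  cases h with
  | t2 => exact sq 0
  | x1sq => exact sq 1
  | x2sq => exact sq 2
  | xcomm => exact comm (commute_xOp 0 1)
  | y1sq => exact sq 3
  | y2sq => exact sq 4
  | ycomm => exact comm (commute_yOp 0 1)
  | ycentral i j =>
    have hj : genOp (3 + Fin.castLE (by decide) j) = yOp j := by fin_cases j <;> rfl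
    exact comm (hj ▸ commute_genOp_yOp _ j)

-- Monomials grow to the right, so `A` acts on the right, through the opposite ring.
def rep : A →ₐ[F2] (Module.End F2 (BIx →₀ F2))ᵐᵒᵖ :=
  RingQuot.liftAlgHom F2 ⟨freeRep, freeRep_eq_of_rel⟩

theorem rep_g (k : Fin 5) : rep (g k) = MulOpposite.op (genOp k) := by
  simp [rep, g, freeRep]

def unitIdx : BIx := ([], false, none, none)

def orbitMap : A →ₗ[F2] BIx →₀ F2 :=
  LinearMap.applyₗ (single unitIdx 1) ∘ₗ
    (MulOpposite.opLinearEquiv F2).symm.toLinearMap ∘ₗ rep.toLinearMap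

theorem orbitMap_apply (a : A) : orbitMap a = (rep a).unop (single unitIdx 1) := rfl

theorem orbitMap_mul_g (a : A) (k : Fin 5) : orbitMap (a * g k) = genOp k (orbitMap a) := by
  simp [orbitMap_apply, rep_g, Module.End.mul_apply]

theorem orbitMap_one : orbitMap 1 = single unitIdx 1 := by
  simp [orbitMap_apply]

theorem bElt_unitIdx : bElt unitIdx = 1 := by
  simp [bElt, unitIdx, wWord]

theorem bElt_mul_t (b : BIx) : bElt b * t = linearCombination F2 bElt (tAct b) := by
  obtain ⟨I, e, ix, jy⟩ := b
  have hy : Commute (jy.elim 1 yg) t := commute_yg_g jy 0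
  simp only [bElt, hy.right_comm]
  cases e <;> rcases ix with _ | i <;>
    simp [tAct, bElt, mul_xg_mul_t, mul_t_mul_t, (commute_t_w _).right_comm, wWord_append,
      add_mul]

theorem bElt_mul_x (b : BIx) (p : Fin 2) :
    bElt b * ![g 1, g 2] p = linearCombination F2 bElt (xAct p b) := by
  obtain ⟨I, e, ix, jy⟩ := b
  have hx := mul_exteriorMul (g_mul_g_eq_zero_of_rel ARel.x1sq) (g_mul_g_eq_zero_of_rel ARel.x2sq)
    (commute_g_of_rel ARel.xcomm) (wWord I * if e then t else 1) ix p
  have hy : Commute (jy.elim 1 yg) (![g 1, g 2] p) := by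
    fin_cases p
    exacts [commute_yg_g jy 1, commute_yg_g jy 2]
  simp only [bElt, hy.right_comm, xAct, xg, hx]
  cases exteriorMul p ix <;> simp [bElt, xg]

theorem bElt_mul_y (b : BIx) (q : Fin 2) :
    bElt b * ![g 3, g 4] q = linearCombination F2 bElt (yAct q b) := by
  obtain ⟨I, e, ix, jy⟩ := b
  have hy := mul_exteriorMul (g_mul_g_eq_zero_of_rel ARel.y1sq) (g_mul_g_eq_zero_of_rel ARel.y2sq)
    (commute_g_of_rel ARel.ycomm) (wWord I * (if e then t else 1) * ix.elim 1 xg) jy q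
  simp only [bElt, yAct, yg, hy]
  cases exteriorMul q jy <;> simp [bElt, yg]

theorem bElt_mul_g (b : BIx) (k : Fin 5) :
    bElt b * g k = linearCombination F2 bElt (genOp k (single b 1)) := by
  fin_cases k
  · simpa [genOp, t] using bElt_mul_t b
  · simpa [genOp] using bElt_mul_x b 0
  · simpa [genOp] using bElt_mul_x b 1
  · simpa [genOp] using bElt_mul_y b 0
  · simpa [genOp] using bElt_mul_y b 1

theorem adjoin_range_g : Algebra.adjoin F2 (Set.range g) = ⊤ := by
  rw [show Set.range g = RingQuot.mkAlgHom F2 ARel '' Set.range (ι F2) from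
      Set.range_comp (RingQuot.mkAlgHom F2 ARel) (ι F2), ← AlgHom.map_adjoin,
    FreeAlgebra.adjoin_range_ι, Algebra.map_top, AlgHom.range_eq_top]
  exact RingQuot.mkAlgHom_surjective F2 ARel

theorem linearCombination_bElt_genOp (m : BIx →₀ F2) (k : Fin 5) :
    linearCombination F2 bElt (genOp k m) = linearCombination F2 bElt m * g k := by
  have : linearCombination F2 bElt ∘ₗ genOp k =
      LinearMap.mulRight F2 (g k) ∘ₗ linearCombination F2 bElt :=
    Finsupp.basisSingleOne.ext fun b => by simp [bElt_mul_g]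
  exact LinearMap.congr_fun this m

theorem genOp_cyclic (N : Submodule F2 (BIx →₀ F2)) (h₀ : single unitIdx 1 ∈ N)
    (hN : ∀ k, ∀ m ∈ N, genOp k m ∈ N) : N = ⊤ := by
  have hx (I e) (h : single (I, e, none, none) 1 ∈ N) (ix) : single (I, e, ix, none) 1 ∈ N := by
    have h0 : single (I, e, some 0, none) 1 ∈ N := by
      simpa [genOp, xAct, exteriorMul] using hN 1 _ h
    have h1 : single (I, e, some 1, none) 1 ∈ N := by
      simpa [genOp, xAct, exteriorMul] using hN 2 _ h
    rcases ix with _ | i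
    · exact h
    · fin_cases i
      exacts [h0, h1, by simpa [genOp, xAct, exteriorMul] using hN 2 _ h0]
  have hy (I e ix) (h : single (I, e, ix, none) 1 ∈ N) (jy) : single (I, e, ix, jy) 1 ∈ N := by
    have h0 : single (I, e, ix, some 0) 1 ∈ N := by
      simpa [genOp, yAct, exteriorMul] using hN 3 _ h
    have h1 : single (I, e, ix, some 1) 1 ∈ N := by
      simpa [genOp, yAct, exteriorMul] using hN 4 _ h
    rcases jy with _ | j
    · exact h
    · fin_cases j
      exacts [h0, h1, by simpa [genOp, yAct, exteriorMul] using hN 4 _ h0]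
  have ht (I) (h : single (I, false, none, none) 1 ∈ N) :
      single (I, true, none, none) 1 ∈ N := by
    simpa [genOp, tAct] using hN 0 _ h
  have hw (I) : single (I, false, none, none) 1 ∈ N := by
    induction I using List.reverseRecOn with
    | nil => exact h₀
    | append_singleton I i ih =>
      have := N.add_mem (hN 0 _ (hx I false ih (some i))) (hx I true (ht I ih) (some i))
      simpa [genOp, tAct, add_assoc, add_self_eq_zero_of_zmod_two] using this
  rw [eq_top_iff, ← Finsupp.basisSingleOne.span_eq, Submodule.span_le]
  rintro _ ⟨⟨I, e, ix, jy⟩, rfl⟩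
  refine hy _ _ _ (hx _ _ ?_ ix) jy
  cases e
  exacts [hw I, ht I (hw I)]

/-- additive basis theorem for `H_*(G_λ; ℤ₂)`: the elements
`w_I t^{ε_t} x_i^{ε_i} y_j^{η_j}` form a ℤ₂-vector space basis of `A`
(here the grading `deg t = deg x₁ = deg y₁ = 1`, `deg x₂ = deg y₂ = 2` plays
no role in the basis property itself). -/
theorem stmt_4 :
    LinearIndependent F2 bElt ∧ Submodule.span F2 (Set.range bElt) = ⊤ := by
  have hφL := LinearMap.comp_eq_id_of_cyclic orbitMap_mul_g linearCombination_bElt_genOp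
    genOp_cyclic (by simp [bElt_unitIdx, orbitMap_one])
  have hLφ := LinearMap.comp_eq_id_of_adjoin_eq_top adjoin_range_g orbitMap_mul_g
    linearCombination_bElt_genOp (by simp [orbitMap_one, bElt_unitIdx])
  refine ⟨LinearMap.injective_of_comp_eq_id _ _ hφL, ?_⟩
  rw [← Finsupp.range_linearCombination, LinearMap.range_eq_top]
  exact LinearMap.surjective_of_comp_eq_id _ _ hLφ
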